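/- For permutations π, σ of {1,...,n}, the function Q_π + Q_σ is bent (resp. near-bent) if and only if Q_{I_n} + Q_{σ^{-1}∘π} is bent (resp. near-bent). -/

import Mathlib

open Finset

/-- Walsh–Hadamard transform (integer-valued) of a Boolean function over an
arbitrary finite index type. -/
def walshOn {ι : Type*} [Fintype ι] [DecidableEq ι]
    (f : (ι → ZMod 2) → ZMod 2) (c : ι → ZMod 2) : ℤ :=
  ∑ x : ι → ZMod 2, (-1 : ℤ) ^ ((f x + ∑ k, c k * x k).val)

/-- The quadratic function `Q_π(x) = ∑_{i=1}^{n-1} x_{π(i)} x_{π(i+1)}`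
(0-indexed). -/
def Qperm (n : ℕ) (π : Equiv.Perm (Fin n)) (x : Fin n → ZMod 2) : ZMod 2 :=
  ∑ i : Fin n, if h : (i : ℕ) + 1 < n then x (π i) * x (π ⟨(i : ℕ) + 1, h⟩) else 0

/-- A Boolean function on `𝔽₂ⁿ` is bent if its Walsh spectrum is `{±2^(n/2)}`. -/
def IsBent (n : ℕ) (f : (Fin n → ZMod 2) → ZMod 2) : Prop :=
  ∀ c, walshOn f c = 2 ^ (n / 2) ∨ walshOn f c = -2 ^ (n / 2)

/-- A Boolean function on `𝔽₂ⁿ` is near-bent if its Walsh spectrum is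
`{0, ±2^((n+1)/2)}`. -/
def IsNearBent (n : ℕ) (f : (Fin n → ZMod 2) → ZMod 2) : Prop :=
  ∀ c, walshOn f c = 0 ∨ walshOn f c = 2 ^ ((n + 1) / 2) ∨
    walshOn f c = -(2 ^ ((n + 1) / 2))

/-- The reverse of a permutation: `π̃(i) = π(n+1-i)` (1-indexed). -/
def reversePerm (n : ℕ) (π : Equiv.Perm (Fin n)) : Equiv.Perm (Fin n) :=
  Fin.revPerm.trans π

/- Relabelling the coordinates by `σ⁻¹` turns `Q_π + Q_σ` into `Q_{σ⁻¹π} + Q_{I_n}`, and a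
relabelling of the coordinates only permutes the Walsh spectrum (the character index is
relabelled along with it), so it preserves bentness and near-bentness. -/

lemma Qperm_comp_perm (n : ℕ) (σ τ : Equiv.Perm (Fin n)) (x : Fin n → ZMod 2) :
    Qperm n τ (x ∘ ⇑σ⁻¹) = Qperm n (σ⁻¹ * τ) x := rfl

lemma walshOn_comp_equiv {ι κ : Type*} [Fintype ι] [DecidableEq ι] [Fintype κ] [DecidableEq κ]
    (e : ι ≃ κ) (g : (κ → ZMod 2) → ZMod 2) (c : ι → ZMod 2) :
    walshOn (fun x => g (x ∘ e.symm)) c = walshOn g (c ∘ e.symm) := by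
  unfold walshOn
  refine Fintype.sum_equiv (e.arrowCongr (Equiv.refl (ZMod 2))) _ _ fun x => ?_
  have hchar : ∑ j, (c ∘ e.symm) j * (x ∘ e.symm) j = ∑ k, c k * x k :=
    e.symm.sum_comp fun k => c k * x k
  exact congrArg (fun s => (-1 : ℤ) ^ (g (x ∘ e.symm) + s).val) hchar.symm

section Relabel

variable (n : ℕ) (σ : Equiv.Perm (Fin n)) (f : (Fin n → ZMod 2) → ZMod 2)

lemma walshOn_comp_perm (c : Fin n → ZMod 2) :
    walshOn (fun x => f (x ∘ ⇑σ)) c = walshOn f (c ∘ ⇑σ) :=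
  walshOn_comp_equiv σ.symm f c

lemma forall_walshOn_comp_perm_iff (P : ℤ → Prop) :
    (∀ c, P (walshOn (fun x => f (x ∘ ⇑σ)) c)) ↔ ∀ c, P (walshOn f c) := by
  simp only [walshOn_comp_perm]
  exact ((σ.symm.arrowCongr (Equiv.refl (ZMod 2))).surjective.forall
    (p := fun c => P (walshOn f c))).symm

lemma isBent_comp_perm : IsBent n (fun x => f (x ∘ ⇑σ)) ↔ IsBent n f :=
  forall_walshOn_comp_perm_iff n σ f fun w => w = 2 ^ (n / 2) ∨ w = -2 ^ (n / 2)

lemma isNearBent_comp_perm : IsNearBent n (fun x => f (x ∘ ⇑σ)) ↔ IsNearBent n f :=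
  forall_walshOn_comp_perm_iff n σ f fun w =>
    w = 0 ∨ w = 2 ^ ((n + 1) / 2) ∨ w = -(2 ^ ((n + 1) / 2))

end Relabel

theorem bent_iff_comp_inverse (n : ℕ) (π σ : Equiv.Perm (Fin n)) :
    (IsBent n (fun x => Qperm n π x + Qperm n σ x) ↔
      IsBent n (fun x => Qperm n 1 x + Qperm n (σ⁻¹ * π) x)) ∧
    (IsNearBent n (fun x => Qperm n π x + Qperm n σ x) ↔
      IsNearBent n (fun x => Qperm n 1 x + Qperm n (σ⁻¹ * π) x)) := by
  have relabel : (fun x => Qperm n 1 x + Qperm n (σ⁻¹ * π) x) =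
      fun x => Qperm n π (x ∘ ⇑σ⁻¹) + Qperm n σ (x ∘ ⇑σ⁻¹) := by
    funext x
    rw [Qperm_comp_perm, Qperm_comp_perm, inv_mul_cancel, add_comm]
  rw [relabel, isBent_comp_perm n σ⁻¹ fun y => Qperm n π y + Qperm n σ y,
    isNearBent_comp_perm n σ⁻¹ fun y => Qperm n π y + Qperm n σ y]
  exact ⟨Iff.rfl, Iff.rfl⟩
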